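/- arXiv:2103.12594 — 3 statements merged into one kernel-verified Lean document; each statement's English description precedes it below -/
import Mathlib

section
/- In every state reachable by an execution of the NE algorithm, the following invariant holds: for every vertex v in the core set C, every neighbor of v in G lies in C ∪ S_1 ∪ … ∪ S_k; moreover, if the execution has so far performed operations only of phases 1, …, i, then every neighbor of every core vertex lies in C ∪ S_1 ∪ … ∪ S_i. -/
/-!
Model of the NE (neighborhood expansion) edge-partitioning algorithm.

A state consists of a core set `C` and secondary sets `S_1, …, S_k`
(all initially empty).  During phase `i` the operations are
`moveToSecondary i u` (requires `u ∉ C ∪ S i`, adds `u` to `S i`) and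
`moveToCore i v` (requires `v ∉ C`, where `v` is chosen from `S i \ C`
if that set is nonempty; adds `v` to `C` and then moves every neighbor
`u` of `v` with `u ∉ C ∪ S i` to `S i`).  The adjacency list of a vertex
`x` is accessed exactly when `moveToCore i x` or `moveToSecondary i x`
is performed.  An execution is a finite sequence of such operations from
the initial state whose phases are monotonically non-decreasing.
-/

/-- An operation of the NE algorithm, recording the phase and the vertex
whose adjacency list is accessed. -/
inductive NEOp (V : Type*) (k : ℕ) where
  | moveToCore (i : Fin k) (v : V)
  | moveToSecondary (i : Fin k) (v : V)
  deriving DecidableEq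

/-- The phase during which an operation is performed. -/
def NEOp.phase {V : Type*} {k : ℕ} : NEOp V k → Fin k
  | .moveToCore i _ => i
  | .moveToSecondary i _ => i

/-- A state of the NE algorithm: the core set `C` and the secondary sets
`S_1, …, S_k`. -/
structure NEState (V : Type*) (k : ℕ) where
  core : Finset V
  sec : Fin k → Finset V

/-- The initial state: everything is empty. -/
def NEState.init (V : Type*) (k : ℕ) : NEState V k := ⟨∅, fun _ => ∅⟩

variable {V : Type*} [DecidableEq V] [Fintype V]

/-- The transition relation of the NE algorithm. -/
inductive NEStep (G : SimpleGraph V) [DecidableRel G.Adj] {k : ℕ} :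
    NEState V k → NEOp V k → NEState V k → Prop
  | moveToSecondary (σ : NEState V k) (i : Fin k) (u : V)
      (hu : u ∉ σ.core ∪ σ.sec i) :
      NEStep G σ (.moveToSecondary i u)
        ⟨σ.core, Function.update σ.sec i (insert u (σ.sec i))⟩
  | moveToCore (σ : NEState V k) (i : Fin k) (v : V)
      (hv : v ∉ σ.core)
      (hchoice : (σ.sec i \ σ.core).Nonempty → v ∈ σ.sec i \ σ.core) :
      NEStep G σ (.moveToCore i v)
        ⟨insert v σ.core,
         Function.update σ.sec i
           (σ.sec i ∪ (G.neighborFinset v \ (insert v σ.core ∪ σ.sec i)))⟩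

/-- `NEExec G σ ops σ'` : starting in state `σ`, performing the sequence of
operations `ops` leads to state `σ'`. -/
inductive NEExec (G : SimpleGraph V) [DecidableRel G.Adj] {k : ℕ} :
    NEState V k → List (NEOp V k) → NEState V k → Prop
  | nil (σ : NEState V k) : NEExec G σ [] σ
  | cons {σ σ' σ'' : NEState V k} {op : NEOp V k} {ops : List (NEOp V k)} :
      NEStep G σ op σ' → NEExec G σ' ops σ'' → NEExec G σ (op :: ops) σ''

/-!
The invariant "every neighbor of a core vertex is in the core or in a secondary set of an
allowed phase" holds trivially in the initial state and survives every step: all sets only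
grow, and the one vertex that `moveToCore i v` adds to the core has each of its neighbors
either already in `C ∪ S i` or moved into `S i` by that very operation.
-/

namespace NEState

variable {k : ℕ}

def CoreNeighborsCovered (G : SimpleGraph V) (P : Fin k → Prop) (σ : NEState V k) : Prop :=
  ∀ v ∈ σ.core, ∀ u, G.Adj v u → u ∈ σ.core ∨ ∃ j, P j ∧ u ∈ σ.sec j

end NEState

namespace NEStep

variable {G : SimpleGraph V} [DecidableRel G.Adj] {k : ℕ} {σ σ' : NEState V k} {op : NEOp V k}

theorem core_subset (h : NEStep G σ op σ') : σ.core ⊆ σ'.core := by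
  cases h with
  | moveToSecondary => exact subset_rfl
  | moveToCore => exact Finset.subset_insert _ _

theorem sec_subset (h : NEStep G σ op σ') (j : Fin k) : σ.sec j ⊆ σ'.sec j := by
  cases h with
  | moveToSecondary i =>
    rcases eq_or_ne j i with rfl | hji
    · simpa only [Function.update_self] using Finset.subset_insert _ _
    · exact (Function.update_of_ne hji _ _).superset
  | moveToCore i =>
    rcases eq_or_ne j i with rfl | hji
    · simpa only [Function.update_self] using Finset.subset_union_left
    · exact (Function.update_of_ne hji _ _).superset

theorem adj_mem_of_moveToCore {i : Fin k} {v u : V} (h : NEStep G σ (.moveToCore i v) σ')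
    (hvu : G.Adj v u) : u ∈ σ'.core ∨ u ∈ σ'.sec i := by
  cases h
  simp only [Function.update_self, Finset.mem_union, Finset.mem_sdiff,
    SimpleGraph.mem_neighborFinset]
  tauto

theorem coreNeighborsCovered {P : Fin k → Prop} (h : NEStep G σ op σ') (hP : P op.phase)
    (hσ : σ.CoreNeighborsCovered G P) : σ'.CoreNeighborsCovered G P := by
  have covered_of_old : ∀ v ∈ σ.core, ∀ u, G.Adj v u →
      u ∈ σ'.core ∨ ∃ j, P j ∧ u ∈ σ'.sec j := fun v hv u hvu =>
    (hσ v hv u hvu).imp (fun hu => h.core_subset hu)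
      fun ⟨j, hj, hu⟩ => ⟨j, hj, h.sec_subset j hu⟩
  intro v hv u hvu
  have hstep := h
  cases h with
  | moveToSecondary => exact covered_of_old v hv u hvu
  | moveToCore i =>
    rcases Finset.mem_insert.mp hv with rfl | hv
    · exact (hstep.adj_mem_of_moveToCore hvu).imp_right fun hu => ⟨i, hP, hu⟩
    · exact covered_of_old v hv u hvu

end NEStep

theorem NEExec.coreNeighborsCovered {G : SimpleGraph V} [DecidableRel G.Adj] {k : ℕ}
    {σ σ' : NEState V k} {ops : List (NEOp V k)} {P : Fin k → Prop} (h : NEExec G σ ops σ')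
    (hP : ∀ op ∈ ops, P op.phase) (hσ : σ.CoreNeighborsCovered G P) :
    σ'.CoreNeighborsCovered G P := by
  induction h with
  | nil => exact hσ
  | cons hstep _ ih =>
    exact ih (fun op hop => hP op (List.mem_cons_of_mem _ hop))
      (hstep.coreNeighborsCovered (hP _ List.mem_cons_self) hσ)

theorem ne_core_neighbors_covered_general
    (G : SimpleGraph V) [DecidableRel G.Adj] {k : ℕ}
    (ops : List (NEOp V k)) (σ : NEState V k)
    (hexec : NEExec G (NEState.init V k) ops σ) :
    (∀ v ∈ σ.core, ∀ u : V, G.Adj v u →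
        u ∈ σ.core ∨ ∃ j : Fin k, u ∈ σ.sec j) ∧
    (∀ i : Fin k, (∀ op ∈ ops, op.phase ≤ i) →
        ∀ v ∈ σ.core, ∀ u : V, G.Adj v u →
          u ∈ σ.core ∨ ∃ j : Fin k, j ≤ i ∧ u ∈ σ.sec j) := by
  have init_covered (P : Fin k → Prop) : (NEState.init V k).CoreNeighborsCovered G P := by
    simp [NEState.CoreNeighborsCovered, NEState.init]
  constructor
  · intro v hv u hvu
    simpa only [true_and] using
      hexec.coreNeighborsCovered (fun _ _ => trivial) (init_covered fun _ => True) v hv u hvu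
  · exact fun i hi => hexec.coreNeighborsCovered hi (init_covered (· ≤ i))

/-- In every state reachable by an execution of the NE
algorithm the following invariant holds: every neighbor of a core vertex lies
in `C ∪ S_1 ∪ … ∪ S_k`; moreover, if the execution has so far performed
operations only of phases `1, …, i`, then every neighbor of every core vertex
lies in `C ∪ S_1 ∪ … ∪ S_i`. -/
theorem ne_core_neighbors_covered
    (G : SimpleGraph V) [DecidableRel G.Adj] {k : ℕ}
    (ops : List (NEOp V k)) (σ : NEState V k)
    (hexec : NEExec G (NEState.init V k) ops σ)
    (hord : ops.Chain' fun a b => a.phase ≤ b.phase) :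
    (∀ v ∈ σ.core, ∀ u : V, G.Adj v u →
        u ∈ σ.core ∨ ∃ j : Fin k, u ∈ σ.sec j) ∧
    (∀ i : Fin k, (∀ op ∈ ops, op.phase ≤ i) →
        ∀ v ∈ σ.core, ∀ u : V, G.Adj v u →
          u ∈ σ.core ∨ ∃ j : Fin k, j ≤ i ∧ u ∈ σ.sec j) :=
  ne_core_neighbors_covered_general G ops σ hexec
end

section
/- In the NE algorithm with lazy edge removal, no edge is assigned to two different partitions: for every execution, the sets of edges assigned by distinct MoveToSecondary operations are pairwise disjoint, so each edge of G is assigned to at most one partition p_i. In particular, it is never necessary to delete assigned edges from the adjacency lists of vertices that were moved to the core set C; removing, at the end of each phase i, only the entries u ∈ C ∪ S_i from the adjacency lists of vertices v ∈ S_i suffices to prevent any double assignment. -/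
/-!
Model of the NE algorithm with *lazy edge removal*.

A state consists of the core set `C`, secondary sets `S_1, …, S_k`,
assigned-edge sets `p_1, …, p_k` and a working adjacency structure
(initially the adjacency lists of `G`).  During phase `i` the operations are
`MoveToSecondary_i(u)` (requires `u ∉ C ∪ S_i`, adds `u` to `S_i` and assigns
every edge `{u, w}` with `w` currently in `u`'s working adjacency list and
`w ∈ C ∪ S_i` to some partition) and `MoveToCore_i(v)` (requires `v ∉ C`,
adds `v` to `C`; the cascaded `MoveToSecondary_i` calls appear as explicit
operations of the execution).  No adjacency-list entries are deleted during a
phase; instead, at the end of each phase `i` a clean-up operation deletes,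
for every `v ∈ S_i`, every entry `u ∈ C ∪ S_i` from `v`'s working adjacency
list.  An execution consists, for each phase `i = 1, …, k` in order, of a
block of phase-`i` operations followed by the clean-up of phase `i`.
-/

/-- An operation of the NE algorithm with lazy edge removal. -/
inductive LOp (V : Type*) (k : ℕ) where
  | secondary (i : Fin k) (v : V)
  | core (i : Fin k) (v : V)
  | cleanup (i : Fin k)
  deriving DecidableEq

/-- The phase of an operation. -/
def LOp.phase {V : Type*} {k : ℕ} : LOp V k → Fin k
  | .secondary i _ => i
  | .core i _ => i
  | .cleanup i => i

/-- Whether an operation is a clean-up operation. -/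
def LOp.isCleanup {V : Type*} {k : ℕ} : LOp V k → Bool
  | .secondary _ _ => false
  | .core _ _ => false
  | .cleanup _ => true

/-- A state: core set, secondary sets, assigned-edge sets (`part i` models
`p_i`), and the working adjacency structure. -/
structure LState (V : Type*) (k : ℕ) where
  core : Finset V
  sec : Fin k → Finset V
  part : Fin k → Finset (Sym2 V)
  adj : V → Finset V

variable {V : Type*} [DecidableEq V] [Fintype V]

/-- The initial state: `C`, all `S_i` and all `p_i` are empty, and the
working adjacency structure equals the adjacency lists of `G`. -/
def LState.init (G : SimpleGraph V) [DecidableRel G.Adj] (k : ℕ) :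
    LState V k :=
  ⟨∅, fun _ => ∅, fun _ => ∅, fun v => G.neighborFinset v⟩

/-- The set of edges assigned by the operation `MoveToSecondary_i(u)` when it
is executed in state `σ`: all edges `{u, w}` with `w` currently in `u`'s
working adjacency list and `w ∈ C ∪ S_i`. -/
def assignedEdges {k : ℕ} (σ : LState V k) (i : Fin k) (u : V) :
    Finset (Sym2 V) :=
  (σ.adj u ∩ (σ.core ∪ σ.sec i)).image fun w => s(u, w)

/-- The transition relation of the NE algorithm with lazy edge removal.  In a
`secondary` step, the function `f` chooses, for each newly assigned edge
`{u, w}`, the partition it is assigned to ("to some partition"). -/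
inductive LStep {k : ℕ} : LState V k → LOp V k → LState V k → Prop
  | secondary (σ : LState V k) (i : Fin k) (u : V) (f : V → Fin k)
      (hu : u ∉ σ.core ∪ σ.sec i) :
      LStep σ (.secondary i u)
        { core := σ.core,
          sec := Function.update σ.sec i (insert u (σ.sec i)),
          part := fun j => σ.part j ∪
            (((σ.adj u ∩ (σ.core ∪ σ.sec i)).filter fun w => f w = j).image
              fun w => s(u, w)),
          adj := σ.adj }
  | core (σ : LState V k) (i : Fin k) (v : V) (hv : v ∉ σ.core) :
      LStep σ (.core i v) { σ with core := insert v σ.core }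
  | cleanup (σ : LState V k) (i : Fin k) :
      LStep σ (.cleanup i)
        { σ with adj := fun v =>
            if v ∈ σ.sec i then σ.adj v \ (σ.core ∪ σ.sec i) else σ.adj v }

/-- `LExec σ ops σ'` : starting in state `σ`, performing the sequence of
operations `ops` leads to state `σ'`. -/
inductive LExec {k : ℕ} : LState V k → List (LOp V k) → LState V k → Prop
  | nil (σ : LState V k) : LExec σ [] σ
  | cons {σ σ' σ'' : LState V k} {op : LOp V k} {ops : List (LOp V k)} :
      LStep σ op σ' → LExec σ' ops σ'' → LExec σ (op :: ops) σ''

/-!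
During phase `i` every adjacency entry `y ∈ adj x` of an already assigned edge `{x, y}` is
*inert*: either `x ∈ C`, or `x ∈ S_i` and `y ∈ C ∪ S_i`.  The clean-up of phase `i` deletes
exactly the entries of the second kind, so between phases such entries survive only in the
lists of core vertices, and these lists are never read again because a core vertex is never
moved to a secondary set.  A `MoveToSecondary_i(u)` requires `u ∉ C ∪ S_i`, so it reads only
entries that are not inert and therefore assigns only edges that are still unassigned.
-/

open Function

section

omit [Fintype V]

namespace LState

variable {k : ℕ}

def Assigned (σ : LState V k) (e : Sym2 V) : Prop :=
  ∃ j, e ∈ σ.part j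

def Inert (σ : LState V k) (i : Fin k) (x y : V) : Prop :=
  x ∈ σ.core ∨ (x ∈ σ.sec i ∧ y ∈ σ.core ∪ σ.sec i)

theorem Inert.mono {σ τ : LState V k} {i : Fin k} {x y : V} (hc : σ.core ⊆ τ.core)
    (hs : σ.sec i ⊆ τ.sec i) (h : σ.Inert i x y) : τ.Inert i x y :=
  h.imp (hc ·) (And.imp (hs ·) (Finset.union_subset_union hc hs ·))

theorem inert_of_mem_of_mem {σ : LState V k} {i : Fin k} {x y : V}
    (hx : x ∈ σ.core ∪ σ.sec i) (hy : y ∈ σ.core ∪ σ.sec i) : σ.Inert i x y :=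
  (Finset.mem_union.mp hx).imp_right (⟨·, hy⟩)

structure PhaseInv (i : Fin k) (σ : LState V k) : Prop where
  pairwise_disjoint : Pairwise (Disjoint on σ.part)
  inert : ∀ x y, σ.Assigned s(x, y) → y ∈ σ.adj x → σ.Inert i x y

structure CleanInv (σ : LState V k) : Prop where
  pairwise_disjoint : Pairwise (Disjoint on σ.part)
  mem_core : ∀ x y, σ.Assigned s(x, y) → y ∈ σ.adj x → x ∈ σ.core

theorem CleanInv.phaseInv {σ : LState V k} (h : σ.CleanInv) (i : Fin k) : σ.PhaseInv i :=
  ⟨h.pairwise_disjoint, fun x y he hy => Or.inl (h.mem_core x y he hy)⟩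

theorem PhaseInv.not_assigned_of_mem_assignedEdges {σ : LState V k} {i : Fin k} {u : V}
    {e : Sym2 V} (h : σ.PhaseInv i) (hu : u ∉ σ.core ∪ σ.sec i)
    (he : e ∈ assignedEdges σ i u) : ¬σ.Assigned e := by
  obtain ⟨w, hw, rfl⟩ := Finset.mem_image.mp he
  intro hassigned
  rcases h.inert u w hassigned (Finset.mem_inter.mp hw).1 with hc | ⟨hs, -⟩
  exacts [hu (Finset.mem_union_left _ hc), hu (Finset.mem_union_right _ hs)]

def skeleton (σ : LState V k) : Finset V × (Fin k → Finset V) × (V → Finset V) :=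
  (σ.core, σ.sec, σ.adj)

theorem assignedEdges_eq_of_skeleton_eq {σ τ : LState V k} (h : σ.skeleton = τ.skeleton)
    (i : Fin k) (u : V) : assignedEdges σ i u = assignedEdges τ i u := by
  simp only [skeleton, Prod.mk.injEq] at h
  simp only [assignedEdges, h]

end LState

namespace LStep

variable {k : ℕ} {σ τ : LState V k} {op : LOp V k}

theorem core_mono (h : LStep σ op τ) : σ.core ⊆ τ.core := by
  cases h
  exacts [subset_rfl, Finset.subset_insert _ _, subset_rfl]

theorem sec_mono (h : LStep σ op τ) (j : Fin k) : σ.sec j ⊆ τ.sec j := by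
  cases h with
  | secondary i u =>
    rcases eq_or_ne j i with rfl | hj
    · simp [Finset.subset_insert]
    · simp [Function.update_of_ne hj]
  | core | cleanup => exact subset_rfl

theorem adj_subset (h : LStep σ op τ) (v : V) : τ.adj v ⊆ σ.adj v := by
  cases h with
  | secondary | core => exact subset_rfl
  | cleanup i =>
    dsimp only
    split_ifs
    exacts [Finset.sdiff_subset, subset_rfl]

theorem assigned_mono (h : LStep σ op τ) {e : Sym2 V} (he : σ.Assigned e) : τ.Assigned e := by
  obtain ⟨j, hj⟩ := he
  refine ⟨j, ?_⟩
  cases h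
  exacts [Finset.mem_union_left _ hj, hj, hj]

theorem skeleton_eq {σ' τ' : LState V k} (h : LStep σ op τ) (h' : LStep σ' op τ')
    (hs : σ.skeleton = σ'.skeleton) : τ.skeleton = τ'.skeleton := by
  simp only [LState.skeleton, Prod.mk.injEq] at hs ⊢
  obtain ⟨hc, hsec, hadj⟩ := hs
  cases h <;> cases h' <;> simp_all

theorem notMem_of_secondary {i : Fin k} {u : V} (h : LStep σ (.secondary i u) τ) :
    u ∉ σ.core ∪ σ.sec i := by
  cases h
  assumption

theorem mem_sec_of_secondary {i : Fin k} {u : V} (h : LStep σ (.secondary i u) τ) :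
    u ∈ τ.sec i := by
  cases h
  simp

theorem assigned_secondary_iff {i : Fin k} {u : V} (h : LStep σ (.secondary i u) τ)
    {e : Sym2 V} : τ.Assigned e ↔ σ.Assigned e ∨ e ∈ assignedEdges σ i u := by
  cases h
  simp [LState.Assigned, assignedEdges, exists_or]

theorem pairwise_disjoint_part_of_secondary {i : Fin k} {u : V}
    (h : LStep σ (.secondary i u) τ) (hd : Pairwise (Disjoint on σ.part))
    (hnew : ∀ e ∈ assignedEdges σ i u, ¬σ.Assigned e) : Pairwise (Disjoint on τ.part) := by
  cases h with
  | secondary _ _ f =>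
    intro j j' hjj'
    have hnew_of_mem {j : Fin k} {e : Sym2 V}
        (he : e ∈ ((σ.adj u ∩ (σ.core ∪ σ.sec i)).filter (f · = j)).image (s(u, ·))) :
        ¬σ.Assigned e :=
      hnew e (Finset.image_subset_image (Finset.filter_subset _ _) he)
    rw [onFun, Finset.disjoint_union_left, Finset.disjoint_union_right,
      Finset.disjoint_union_right]
    refine ⟨⟨hd hjj', Finset.disjoint_right.mpr fun e he he' => hnew_of_mem he ⟨j, he'⟩⟩,
      Finset.disjoint_left.mpr fun e he he' => hnew_of_mem he ⟨j', he'⟩, ?_⟩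
    rw [Finset.disjoint_image fun _ _ => Sym2.congr_right.mp, Finset.disjoint_filter]
    exact fun _ _ hj hj' => hjj' (hj.symm.trans hj')

end LStep

namespace LExec

variable {k : ℕ} {σ τ : LState V k} {l : List (LOp V k)}

theorem append_split {l₁ l₂ : List (LOp V k)} (h : LExec σ (l₁ ++ l₂) τ) :
    ∃ ρ, LExec σ l₁ ρ ∧ LExec ρ l₂ τ := by
  induction l₁ generalizing σ with
  | nil => exact ⟨σ, .nil σ, h⟩
  | cons op l ih =>
    cases h with
    | cons hs he =>
      obtain ⟨ρ, h₁, h₂⟩ := ih he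
      exact ⟨ρ, .cons hs h₁, h₂⟩

theorem assigned_mono (h : LExec σ l τ) {e : Sym2 V} (he : σ.Assigned e) : τ.Assigned e := by
  induction h with
  | nil => exact he
  | cons hs _ ih => exact ih (hs.assigned_mono he)

theorem skeleton_eq {σ' τ' : LState V k} (h : LExec σ l τ) (h' : LExec σ' l τ')
    (hs : σ.skeleton = σ'.skeleton) : τ.skeleton = τ'.skeleton := by
  induction h generalizing σ' with
  | nil => cases h'; exact hs
  | cons hstep _ ih =>
    cases h' with
    | cons hstep' he' => exact ih he' (hstep.skeleton_eq hstep' hs)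

theorem assignedEdges_eq {τ' : LState V k} (h : LExec σ l τ) (h' : LExec σ l τ') (i : Fin k)
    (u : V) : assignedEdges τ i u = assignedEdges τ' i u :=
  LState.assignedEdges_eq_of_skeleton_eq (h.skeleton_eq h' rfl) i u

end LExec

namespace LState

variable {k : ℕ} {σ τ : LState V k} {i : Fin k}

theorem PhaseInv.step_secondary {v : V} (h : σ.PhaseInv i) (hs : LStep σ (.secondary i v) τ) :
    τ.PhaseInv i := by
  refine ⟨hs.pairwise_disjoint_part_of_secondary h.pairwise_disjoint
    fun e => h.not_assigned_of_mem_assignedEdges hs.notMem_of_secondary, fun x y hxy hy => ?_⟩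
  rcases hs.assigned_secondary_iff.mp hxy with hold | hnew
  · exact (h.inert x y hold (hs.adj_subset x hy)).mono hs.core_mono (hs.sec_mono i)
  · obtain ⟨w, hw, hvw⟩ := Finset.mem_image.mp hnew
    have hends : ∀ z ∈ s(v, w), z ∈ τ.core ∪ τ.sec i := by
      simp only [Sym2.mem_iff]
      rintro z (rfl | rfl)
      · exact Finset.mem_union_right _ hs.mem_sec_of_secondary
      · exact Finset.union_subset_union hs.core_mono (hs.sec_mono i) (Finset.mem_inter.mp hw).2
    rw [hvw] at hends
    exact inert_of_mem_of_mem (hends x (Sym2.mem_mk_left x y)) (hends y (Sym2.mem_mk_right x y))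

theorem PhaseInv.step_core {i' : Fin k} {v : V} (h : σ.PhaseInv i)
    (hs : LStep σ (.core i' v) τ) : τ.PhaseInv i := by
  cases hs
  exact ⟨h.pairwise_disjoint, fun x y hxy hy =>
    (h.inert x y hxy hy).mono (Finset.subset_insert _ _) subset_rfl⟩

theorem PhaseInv.cleanInv_of_cleanup (h : σ.PhaseInv i) (hs : LStep σ (.cleanup i) τ) :
    τ.CleanInv := by
  cases hs
  refine ⟨h.pairwise_disjoint, fun x y hxy hy => ?_⟩
  dsimp only at hy
  split_ifs at hy with hx
  · obtain ⟨hy, hy'⟩ := Finset.mem_sdiff.mp hy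
    exact (h.inert x y hxy hy).resolve_right fun h' => hy' h'.2
  · exact (h.inert x y hxy hy).resolve_right fun h' => hx h'.1

theorem PhaseInv.exec_block {l : List (LOp V k)}
    (hl : ∀ op ∈ l, op.phase = i ∧ op.isCleanup = false) (he : LExec σ l τ)
    (h : σ.PhaseInv i) : τ.PhaseInv i := by
  induction he with
  | nil => exact h
  | @cons _ _ _ op _ hs _ ih =>
    refine ih (fun op' h' => hl op' (List.mem_cons_of_mem _ h')) ?_
    obtain ⟨hphase, hcleanup⟩ := hl op List.mem_cons_self
    cases op with
    | secondary j v =>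
      obtain rfl : j = i := hphase
      exact h.step_secondary hs
    | core => exact h.step_core hs
    | cleanup => cases hcleanup

variable {blocks : Fin k → List (LOp V k)}

theorem CleanInv.exec_phases
    (hblocks : ∀ i : Fin k, ∀ op ∈ blocks i, op.phase = i ∧ op.isCleanup = false)
    {L : List (Fin k)} (he : LExec σ (L.flatMap fun i => blocks i ++ [LOp.cleanup i]) τ)
    (h : σ.CleanInv) : τ.CleanInv := by
  induction L generalizing σ with
  | nil => cases he; exact h
  | cons i L ih =>
    rw [List.flatMap_cons] at he
    obtain ⟨ρ, hρ, he⟩ := he.append_split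
    obtain ⟨ρ', hblock, hcleanup⟩ := hρ.append_split
    cases hcleanup with
    | cons hs hnil =>
      cases hnil
      exact ih he (((h.phaseInv i).exec_block (hblocks i) hblock).cleanInv_of_cleanup hs)

theorem CleanInv.phaseInv_of_exec_prefix
    (hblocks : ∀ i : Fin k, ∀ op ∈ blocks i, op.phase = i ∧ op.isCleanup = false)
    {L : List (Fin k)} {pre post : List (LOp V k)} {op : LOp V k}
    (hL : (L.flatMap fun i => blocks i ++ [LOp.cleanup i]) = pre ++ op :: post)
    (he : LExec σ pre τ) (h : σ.CleanInv) : τ.PhaseInv op.phase := by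
  induction L generalizing σ pre with
  | nil => simp at hL
  | cons i L ih =>
    rw [List.flatMap_cons] at hL
    have past_phase : ∀ a, pre = (blocks i ++ [LOp.cleanup i]) ++ a →
        (L.flatMap fun i => blocks i ++ [LOp.cleanup i]) = a ++ op :: post →
        τ.PhaseInv op.phase := by
      rintro a rfl hrest
      obtain ⟨ρ, hρ, he⟩ := he.append_split
      exact ih hrest he (h.exec_phases hblocks (L := [i]) (by simpa using hρ))
    rcases List.append_eq_append_iff.mp hL with
      ⟨a, hpre, hrest⟩ | ⟨_ | ⟨op', c⟩, hseg, hrest⟩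
    · exact past_phase a hpre hrest
    · exact past_phase [] (by simpa using hseg.symm) (by simpa using hrest.symm)
    · obtain ⟨rfl, rfl⟩ := List.cons_eq_cons.mp hrest
      have hpre : pre <+: blocks i := by
        refine (List.prefix_concat_iff.mp ⟨op :: c, hseg.symm⟩).resolve_left fun hpre => ?_
        simpa [hpre] using congrArg List.length hseg
      have hphase : op.phase = i := by
        have hop : op ∈ pre ++ op :: c := List.mem_append_right pre List.mem_cons_self
        rw [← hseg] at hop
        obtain hop | rfl : op ∈ blocks i ∨ op = .cleanup i := by simpa using hop
        exacts [(hblocks i op hop).1, rfl]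
      rw [hphase]
      exact (h.phaseInv i).exec_block (fun op' h' => hblocks i op' (hpre.subset h')) he

end LState

end

omit [DecidableEq V] in
theorem LState.CleanInv.init (G : SimpleGraph V) [DecidableRel G.Adj] {k : ℕ} :
    (LState.init G k).CleanInv where
  pairwise_disjoint _ _ _ := by simp [LState.init]
  mem_core _ _ := fun ⟨_, he⟩ => by simp [LState.init] at he

theorem ne_lazy_removal_no_double_assignment_general
    (G : SimpleGraph V) [DecidableRel G.Adj] {k : ℕ}
    (blocks : Fin k → List (LOp V k))
    (hblocks : ∀ i : Fin k, ∀ op ∈ blocks i,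
        op.phase = i ∧ op.isCleanup = false)
    (ops : List (LOp V k))
    (hops : ops = (List.finRange k).flatMap fun i => blocks i ++ [LOp.cleanup i])
    (σf : LState V k)
    (hexec : LExec (LState.init G k) ops σf) :
    -- the edge sets assigned by distinct `MoveToSecondary` operations are
    -- pairwise disjoint
    (∀ (l₁ l₂ l₃ : List (LOp V k)) (i i' : Fin k) (u u' : V)
        (σ₁ σ₂ : LState V k),
        ops = l₁ ++ LOp.secondary i u :: (l₂ ++ LOp.secondary i' u' :: l₃) →
        LExec (LState.init G k) l₁ σ₁ →
        LExec (LState.init G k) (l₁ ++ LOp.secondary i u :: l₂) σ₂ →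
        Disjoint (assignedEdges σ₁ i u) (assignedEdges σ₂ i' u')) ∧
    -- hence each edge of `G` is assigned to at most one partition
    (∀ j j' : Fin k, j ≠ j' → Disjoint (σf.part j) (σf.part j')) ∧
    (∀ e : Sym2 V, ∀ j j' : Fin k, e ∈ σf.part j → e ∈ σf.part j' → j = j') := by
  have hfinal : σf.CleanInv := (LState.CleanInv.init G).exec_phases hblocks (hops ▸ hexec)
  refine ⟨fun l₁ l₂ l₃ i i' u u' σ₁ σ₂ hdec he₁ he₂ => ?_, fun _ _ hne =>
    hfinal.pairwise_disjoint hne, fun e j j' hj hj' => by_contra fun hne =>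
    Finset.disjoint_left.mp (hfinal.pairwise_disjoint hne) hj hj'⟩
  replace hdec : ops = (l₁ ++ .secondary i u :: l₂) ++ .secondary i' u' :: l₃ := by
    simp [hdec]
  rw [hdec] at hexec
  obtain ⟨σc, hpre, hpost⟩ := hexec.append_split
  obtain ⟨σa, ha, hmid⟩ := hpre.append_split
  cases hmid with | cons hsb hc =>
  cases hpost with | cons hsd _ =>
  have hinv : σc.PhaseInv i' :=
    (LState.CleanInv.init G).phaseInv_of_exec_prefix hblocks (hops.symm.trans hdec) hpre
  rw [he₁.assignedEdges_eq ha, he₂.assignedEdges_eq hpre, Finset.disjoint_left]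
  exact fun e he he' => hinv.not_assigned_of_mem_assignedEdges hsd.notMem_of_secondary he'
    (hc.assigned_mono (hsb.assigned_secondary_iff.mpr (Or.inr he)))

/-- In the NE algorithm with lazy edge removal, no edge is
assigned to two different partitions: for every execution (consisting, for
each phase `i` in order, of a block of phase-`i` operations followed by the
clean-up of phase `i`), the sets of edges assigned by distinct
`MoveToSecondary` operations are pairwise disjoint, so each edge of `G` is
assigned to at most one partition `p_i`.  In particular, removing, at the end
of each phase `i`, only the entries `u ∈ C ∪ S_i` from the adjacency lists of
vertices `v ∈ S_i` (and never deleting assigned edges from the adjacency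
lists of vertices moved to the core set) suffices to prevent any double
assignment. -/
theorem ne_lazy_removal_no_double_assignment
    (G : SimpleGraph V) [DecidableRel G.Adj] {k : ℕ} (hk : 1 ≤ k)
    (blocks : Fin k → List (LOp V k))
    (hblocks : ∀ i : Fin k, ∀ op ∈ blocks i,
        op.phase = i ∧ op.isCleanup = false)
    (ops : List (LOp V k))
    (hops : ops = (List.finRange k).flatMap fun i => blocks i ++ [LOp.cleanup i])
    (σf : LState V k)
    (hexec : LExec (LState.init G k) ops σf) :
    -- the edge sets assigned by distinct `MoveToSecondary` operations are
    -- pairwise disjoint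
    (∀ (l₁ l₂ l₃ : List (LOp V k)) (i i' : Fin k) (u u' : V)
        (σ₁ σ₂ : LState V k),
        ops = l₁ ++ LOp.secondary i u :: (l₂ ++ LOp.secondary i' u' :: l₃) →
        LExec (LState.init G k) l₁ σ₁ →
        LExec (LState.init G k) (l₁ ++ LOp.secondary i u :: l₂) σ₂ →
        Disjoint (assignedEdges σ₁ i u) (assignedEdges σ₂ i' u')) ∧
    -- hence each edge of `G` is assigned to at most one partition
    (∀ j j' : Fin k, j ≠ j' → Disjoint (σf.part j) (σf.part j')) ∧
    (∀ e : Sym2 V, ∀ j j' : Fin k, e ∈ σf.part j → e ∈ σf.part j' → j = j') :=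
  ne_lazy_removal_no_double_assignment_general G blocks hblocks ops hops σf hexec
end

section
/- In the NE algorithm with lazy edge removal, after the clean-up phase of each partition p_i the following holds: for every vertex v not in the core set C, the working adjacency list of v contains no vertex of C. Consequently, expansions of subsequent partitions never reach a core vertex, and no edge both of whose endpoints are in C is ever visited or assigned again after clean-up. -/
/-!
Model of the NE algorithm with *lazy edge removal*.

A state consists of the core set `C`, secondary sets `S_1, …, S_k` and a
working adjacency structure (initially the adjacency lists of `G`).  During
phase `i` the operations are `MoveToSecondary_i(u)` (requires `u ∉ C ∪ S_i`
and adds `u` to `S_i`; the edges `{u, w}` with `w` in `u`'s working adjacency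
list and `w ∈ C ∪ S_i` are the ones assigned to a partition by this
operation) and `MoveToCore_i(v)` (requires `v ∉ C`, adds `v` to `C`, and then
applies `MoveToSecondary_i(u)` to every neighbor `u` of `v` in `v`'s working
adjacency list with `u ∉ C ∪ S_i`).  Lazy edge removal: no adjacency-list
entries are deleted during a phase; instead, at the end of each phase `i`
(the clean-up of phase `i`), for every `v ∈ S_i`, every entry `u ∈ C ∪ S_i`
is deleted from `v`'s working adjacency list.  An execution consists, for
each phase `i = 1, …, k` in order, of a block of phase-`i` operations
followed by the clean-up of phase `i`.
-/

/-- An operation of the NE algorithm with lazy edge removal. -/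
inductive COp (V : Type*) (k : ℕ) where
  | secondary (i : Fin k) (v : V)
  | core (i : Fin k) (v : V)
  | cleanup (i : Fin k)
  deriving DecidableEq

/-- The phase of an operation. -/
def COp.phase {V : Type*} {k : ℕ} : COp V k → Fin k
  | .secondary i _ => i
  | .core i _ => i
  | .cleanup i => i

/-- Whether an operation is a clean-up operation. -/
def COp.isCleanup {V : Type*} {k : ℕ} : COp V k → Bool
  | .secondary _ _ => false
  | .core _ _ => false
  | .cleanup _ => true

/-- A state: core set, secondary sets, and the working adjacency structure. -/
structure CState (V : Type*) (k : ℕ) where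
  core : Finset V
  sec : Fin k → Finset V
  adj : V → Finset V

variable {V : Type*} [DecidableEq V] [Fintype V]

/-- The initial state: `C` and all `S_i` are empty, and the working adjacency
structure equals the adjacency lists of `G`. -/
def CState.init (G : SimpleGraph V) [DecidableRel G.Adj] (k : ℕ) :
    CState V k :=
  ⟨∅, fun _ => ∅, fun v => G.neighborFinset v⟩

/-- The transition relation of the NE algorithm with lazy edge removal. -/
inductive CStep {k : ℕ} : CState V k → COp V k → CState V k → Prop
  | secondary (σ : CState V k) (i : Fin k) (u : V)
      (hu : u ∉ σ.core ∪ σ.sec i) :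
      CStep σ (.secondary i u)
        { σ with sec := Function.update σ.sec i (insert u (σ.sec i)) }
  | core (σ : CState V k) (i : Fin k) (v : V) (hv : v ∉ σ.core) :
      CStep σ (.core i v)
        { core := insert v σ.core,
          sec := Function.update σ.sec i
            (σ.sec i ∪ (σ.adj v \ (insert v σ.core ∪ σ.sec i))),
          adj := σ.adj }
  | cleanup (σ : CState V k) (i : Fin k) :
      CStep σ (.cleanup i)
        { σ with adj := fun v =>
            if v ∈ σ.sec i then σ.adj v \ (σ.core ∪ σ.sec i) else σ.adj v }

/-- `CExec σ ops σ'` : starting in state `σ`, performing the sequence of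
operations `ops` leads to state `σ'`. -/
inductive CExec {k : ℕ} : CState V k → List (COp V k) → CState V k → Prop
  | nil (σ : CState V k) : CExec σ [] σ
  | cons {σ σ' σ'' : CState V k} {op : COp V k} {ops : List (COp V k)} :
      CStep σ op σ' → CExec σ' ops σ'' → CExec σ (op :: ops) σ''

/-!
Two invariants carry the argument. Every operation keeps the working adjacency lists
symmetric up to entries at core vertices. During phase `i`, every non-core vertex whose list
contains a core vertex lies in `S_i`: this holds after the previous clean-up, and when `c`
becomes a core vertex, each non-core `v` with `c` in its list also appears in `c`'s list by
symmetry, so `MoveToCore_i(c)` puts `v` into `S_i`. The clean-up of phase `i` then deletes the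
core entries from the lists of all vertices of `S_i`. The claims about later phases only use
that the core grows and that both operations require their argument outside the core.
-/

namespace CState

variable {k : ℕ}

omit [DecidableEq V]

section

omit [Fintype V]

def AdjSymmOffCore (σ : CState V k) : Prop :=
  ∀ u v, v ∈ σ.adj u → u ∈ σ.adj v ∨ u ∈ σ.core ∨ v ∈ σ.core

def CoreSeparated (σ : CState V k) : Prop :=
  ∀ v ∉ σ.core, ∀ u ∈ σ.adj v, u ∉ σ.core

def CoreAdjacentInSec (σ : CState V k) (i : Fin k) : Prop :=
  ∀ v ∉ σ.core, ∀ u ∈ σ.adj v, u ∈ σ.core → v ∈ σ.sec i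

theorem CoreSeparated.coreAdjacentInSec {σ : CState V k} (h : σ.CoreSeparated)
    (i : Fin k) : σ.CoreAdjacentInSec i :=
  fun v hv u hu huc => absurd huc (h v hv u hu)

end

theorem init_coreSeparated (G : SimpleGraph V) [DecidableRel G.Adj] :
    (init G k).CoreSeparated := by
  simp [CoreSeparated, init]

theorem init_adjSymmOffCore (G : SimpleGraph V) [DecidableRel G.Adj] :
    (init G k).AdjSymmOffCore :=
  fun _ _ h => Or.inl (by simpa [init, SimpleGraph.adj_comm] using h)

end CState

namespace CStep

omit [Fintype V]

variable {k : ℕ} {σ σ' : CState V k} {op : COp V k} {i : Fin k} {u : V}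

theorem core_subset (h : CStep σ op σ') : σ.core ⊆ σ'.core := by
  cases h <;> simp [Finset.subset_insert]

theorem notMem_core_of_secondary (h : CStep σ (.secondary i u) σ') : u ∉ σ.core := by
  cases h with
  | secondary _ _ hu => exact fun hc => hu (Finset.mem_union_left _ hc)

theorem notMem_core_of_core (h : CStep σ (.core i u) σ') : u ∉ σ.core := by
  cases h with
  | core _ _ hu => exact hu

theorem adjSymmOffCore (h : CStep σ op σ') (hσ : σ.AdjSymmOffCore) :
    σ'.AdjSymmOffCore := by
  cases h with
  | secondary => exact hσ
  | core =>
    intro u v huv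
    rcases hσ u v huv with h | h | h <;> simp_all
  | cleanup =>
    intro u v huv
    simp only at huv ⊢
    have hvu : v ∈ σ.adj u := by split_ifs at huv <;> simp_all
    -- an entry between two vertices of `S_i` is deleted from both lists
    rcases hσ u v hvu with huv' | huc | hvc
    · split_ifs at huv ⊢ <;> simp_all; tauto
    · exact Or.inr (Or.inl huc)
    · exact Or.inr (Or.inr hvc)

theorem coreAdjacentInSec (h : CStep σ op σ') (hphase : op.phase = i)
    (hcl : op.isCleanup = false) (hsym : σ.AdjSymmOffCore)
    (hσ : σ.CoreAdjacentInSec i) : σ'.CoreAdjacentInSec i := by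
  cases h with
  | secondary i₀ _ _ =>
    obtain rfl : i₀ = i := hphase
    intro v hv w hw hwc
    simpa using Or.inr (hσ v hv w hw hwc)
  | core i₀ c hc =>
    obtain rfl : i₀ = i := hphase
    intro v hv w hw hwc
    simp only [Finset.mem_insert, not_or] at hv hwc
    simp only [Function.update_self, Finset.mem_union, Finset.mem_sdiff,
      Finset.mem_insert, not_or]
    rcases hwc with rfl | hwc
    · have hvw : v ∈ σ.adj w := (hsym v w hw).resolve_right (by tauto)
      tauto
    · exact Or.inl (hσ v hv.2 w hw hwc)
  | cleanup => cases hcl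

theorem coreSeparated_of_cleanup (h : CStep σ (.cleanup i) σ')
    (hσ : σ.CoreAdjacentInSec i) : σ'.CoreSeparated := by
  cases h
  intro v hv u hu huc
  simp only at hv hu huc
  split_ifs at hu with hvs
  · exact (Finset.mem_sdiff.1 hu).2 (Finset.mem_union_left _ huc)
  · exact hvs (hσ v hv u hu huc)

end CStep

namespace CExec

omit [Fintype V]

variable {k : ℕ} {σ σ' : CState V k} {l : List (COp V k)}

theorem preserves {P : CState V k → Prop} (h : CExec σ l σ')
    (hP : ∀ τ op τ', op ∈ l → CStep τ op τ' → P τ → P τ') (hσ : P σ) : P σ' := by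
  induction h with
  | nil => exact hσ
  | cons hstep _ ih =>
    exact ih (fun τ op τ' hop => hP τ op τ' (List.mem_cons_of_mem _ hop))
      (hP _ _ _ List.mem_cons_self hstep hσ)

theorem core_subset (h : CExec σ l σ') : σ.core ⊆ σ'.core :=
  h.preserves (P := fun τ => σ.core ⊆ τ.core)
    (fun _ _ _ _ hstep hsub => hsub.trans hstep.core_subset) subset_rfl

theorem adjSymmOffCore (h : CExec σ l σ') (hσ : σ.AdjSymmOffCore) :
    σ'.AdjSymmOffCore :=
  h.preserves (fun _ _ _ _ hstep => hstep.adjSymmOffCore) hσ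

theorem exists_of_append {l₁ l₂ : List (COp V k)} (h : CExec σ (l₁ ++ l₂) σ') :
    ∃ τ, CExec σ l₁ τ ∧ CExec τ l₂ σ' := by
  induction l₁ generalizing σ with
  | nil => exact ⟨σ, .nil σ, h⟩
  | cons op l₁ ih =>
    obtain _ | ⟨hstep, hrest⟩ := h
    obtain ⟨τ, h₁, h₂⟩ := ih hrest
    exact ⟨τ, .cons hstep h₁, h₂⟩

theorem coreSeparated_of_phase {i : Fin k} {block : List (COp V k)}
    (h : CExec σ (block ++ [.cleanup i]) σ')
    (hblock : ∀ op ∈ block, op.phase = i ∧ op.isCleanup = false)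
    (hsep : σ.CoreSeparated) (hsym : σ.AdjSymmOffCore) : σ'.CoreSeparated := by
  obtain ⟨τ, hτ, hcleanup⟩ := h.exists_of_append
  have hτinv : τ.CoreAdjacentInSec i ∧ τ.AdjSymmOffCore :=
    hτ.preserves (P := fun τ => τ.CoreAdjacentInSec i ∧ τ.AdjSymmOffCore)
      (fun _ op _ hop hstep ⟨hin, hsy⟩ =>
        ⟨hstep.coreAdjacentInSec (hblock op hop).1 (hblock op hop).2 hsy hin,
          hstep.adjSymmOffCore hsy⟩)
      ⟨hsep.coreAdjacentInSec i, hsym⟩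
  obtain _ | ⟨hstep, _ | _⟩ := hcleanup
  exact hstep.coreSeparated_of_cleanup hτinv.1

theorem coreSeparated_of_phases (blocks : Fin k → List (COp V k))
    (hblocks : ∀ i : Fin k, ∀ op ∈ blocks i, op.phase = i ∧ op.isCleanup = false)
    (js : List (Fin k)) (h : CExec σ (js.flatMap fun j => blocks j ++ [.cleanup j]) σ')
    (hsep : σ.CoreSeparated) (hsym : σ.AdjSymmOffCore) : σ'.CoreSeparated := by
  induction js generalizing σ with
  | nil => obtain _ | _ := h; exact hsep
  | cons j js ih =>
    obtain ⟨τ, hτ, hrest⟩ := exists_of_append (by rwa [List.flatMap_cons] at h)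
    exact ih hrest (hτ.coreSeparated_of_phase (hblocks j) hsep hsym) (hτ.adjSymmOffCore hsym)

end CExec

theorem ne_cleanup_separates_core_general
    (G : SimpleGraph V) [DecidableRel G.Adj] {k : ℕ}
    (blocks : Fin k → List (COp V k))
    (hblocks : ∀ i : Fin k, ∀ op ∈ blocks i,
        op.phase = i ∧ op.isCleanup = false)
    (i : Fin k) (σ : CState V k)
    (hexec : CExec (CState.init G k)
      (((List.finRange k).take (i.1 + 1)).flatMap
        fun j => blocks j ++ [COp.cleanup j]) σ) :
    -- after the clean-up of phase `i`, the working adjacency list of any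
    -- non-core vertex contains no core vertex
    (∀ v : V, v ∉ σ.core → ∀ u ∈ σ.adj v, u ∉ σ.core) ∧
    -- consequently, subsequent expansions never reach a core vertex, and no
    -- edge with both endpoints in the core set is ever visited or assigned
    -- again
    (∀ (l l₁ l₂ : List (COp V k)) (op : COp V k) (τ τ' σ' : CState V k),
        CExec σ l σ' → l = l₁ ++ op :: l₂ → CExec σ l₁ τ → CStep τ op τ' →
        (∀ (j : Fin k) (u : V),
          op = COp.secondary j u ∨ op = COp.core j u → u ∉ σ.core) ∧
        (∀ (j : Fin k) (u : V), op = COp.secondary j u →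
          ∀ w ∈ τ.adj u ∩ (τ.core ∪ τ.sec j),
            ¬(u ∈ σ.core ∧ w ∈ σ.core))) := by
  refine ⟨hexec.coreSeparated_of_phases blocks hblocks _
    (CState.init_coreSeparated G) (CState.init_adjSymmOffCore G), ?_⟩
  intro l l₁ l₂ op τ τ' σ' _ _ hτ hstep
  have hcore : σ.core ⊆ τ.core := hτ.core_subset
  refine ⟨?_, ?_⟩
  · rintro j u (rfl | rfl) hu
    exacts [hstep.notMem_core_of_secondary (hcore hu), hstep.notMem_core_of_core (hcore hu)]
  · rintro j u rfl w - ⟨hu, -⟩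
    exact hstep.notMem_core_of_secondary (hcore hu)

/-- In the NE algorithm with lazy edge removal, after the
clean-up phase of each partition `p_i` the following holds: for every vertex
`v` not in the core set `C`, the working adjacency list of `v` contains no
vertex of `C`.  Consequently, expansions of subsequent partitions never reach
a core vertex, and no edge both of whose endpoints are in `C` is ever visited
or assigned again after clean-up: every vertex that is the argument of a
later `MoveToSecondary` or `MoveToCore` operation is outside `C`, and no edge
`{u, w}` visited (and assigned) by a later `MoveToSecondary` operation has
both endpoints in `C`. -/
theorem ne_cleanup_separates_core
    (G : SimpleGraph V) [DecidableRel G.Adj] {k : ℕ} (hk : 1 ≤ k)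
    (blocks : Fin k → List (COp V k))
    (hblocks : ∀ i : Fin k, ∀ op ∈ blocks i,
        op.phase = i ∧ op.isCleanup = false)
    (i : Fin k) (σ : CState V k)
    (hexec : CExec (CState.init G k)
      (((List.finRange k).take (i.1 + 1)).flatMap
        fun j => blocks j ++ [COp.cleanup j]) σ) :
    -- after the clean-up of phase `i`, the working adjacency list of any
    -- non-core vertex contains no core vertex
    (∀ v : V, v ∉ σ.core → ∀ u ∈ σ.adj v, u ∉ σ.core) ∧
    -- consequently, subsequent expansions never reach a core vertex, and no
    -- edge with both endpoints in the core set is ever visited or assigned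
    -- again
    (∀ (l l₁ l₂ : List (COp V k)) (op : COp V k) (τ τ' σ' : CState V k),
        CExec σ l σ' → l = l₁ ++ op :: l₂ → CExec σ l₁ τ → CStep τ op τ' →
        (∀ (j : Fin k) (u : V),
          op = COp.secondary j u ∨ op = COp.core j u → u ∉ σ.core) ∧
        (∀ (j : Fin k) (u : V), op = COp.secondary j u →
          ∀ w ∈ τ.adj u ∩ (τ.core ∪ τ.sec j),
            ¬(u ∈ σ.core ∧ w ∈ σ.core))) :=
  ne_cleanup_separates_core_general G blocks hblocks i σ hexec
end
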